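/- arXiv:1302.3831 — 3 statements merged into one kernel-verified Lean document; each statement's English description precedes it below -/
import Mathlib

section
/- Let V be a unitary operator on ℂ⁴ and let {a₁, a₂}, {b₁, b₂}, {b'₁, b'₂} be orthonormal bases of ℂ². Define ab_{ij} = V⁻¹(aᵢ ⊗ bⱼ) and ab'_{ij} = V⁻¹(aᵢ ⊗ b'ⱼ) (the eigenbases of the product measurements AB and AB' with respect to V), let U be the unique linear operator on ℂ⁴ with U ab_{ij} = ab'_{ij} for all i, j, and let W be the unique linear operator on ℂ² with W bⱼ = b'ⱼ for j = 1, 2. Then U is unitary and V ∘ U ∘ V⁻¹ = 𝟙 ⊗ W, i.e. for all u, v ∈ ℂ², (V ∘ U ∘ V⁻¹)(u ⊗ v) = u ⊗ (W v). In other words, if two coincidence measurements AB and AB' are product measurements with respect to the same isomorphism, then the dynamical evolution connecting them is a product evolution with respect to that isomorphism. -/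
open scoped InnerProductSpace

noncomputable section

/-- Tensor product `u ⊗ v` of two vectors of ℂ², as a vector of ℂ⁴ (the model of ℂ²⊗ℂ²):
`(u ⊗ v)(i,j) = u i * v j`. -/
def tp (u v : EuclideanSpace ℂ (Fin 2)) : EuclideanSpace ℂ (Fin 2 × Fin 2) :=
  WithLp.toLp 2 (fun p : Fin 2 × Fin 2 => u p.1 * v p.2)

/-!
Proof idea: the vectors `aᵢ ⊗ bⱼ` and `aᵢ ⊗ b'ⱼ` form orthonormal bases of ℂ⁴, and so do their
images under the isometry `V⁻¹`; hence `U`, which maps the first of these bases onto the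
second, is unitary. The maps `(u, v) ↦ V (U (V⁻¹ (u ⊗ v)))` and `(u, v) ↦ u ⊗ W v` are both
bilinear and agree on the pairs of basis vectors `(aᵢ, bⱼ)`, so they agree everywhere.
-/

theorem LinearMap.inner_map_map_and_bijective_of_orthonormal_basis {𝕜 E ι : Type*} [RCLike 𝕜]
    [NormedAddCommGroup E] [InnerProductSpace 𝕜 E] [FiniteDimensional 𝕜 E]
    (T : E →ₗ[𝕜] E) {v : Module.Basis ι 𝕜 E} (hv : Orthonormal 𝕜 v)
    (hTv : Orthonormal 𝕜 (T ∘ v)) :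
    (∀ x y, ⟪T x, T y⟫_𝕜 = ⟪x, y⟫_𝕜) ∧ Function.Bijective T := by
  let S := T.isometryOfOrthonormal hv hTv
  have hST : ⇑S = ⇑T := T.coe_isometryOfOrthonormal hv hTv
  rw [← hST]
  exact ⟨S.inner_map_map, (S.toLinearIsometryEquiv rfl).bijective⟩

theorem inner_tp (u v u' v' : EuclideanSpace ℂ (Fin 2)) :
    ⟪tp u v, tp u' v'⟫_ℂ = ⟪u, u'⟫_ℂ * ⟪v, v'⟫_ℂ := by
  simp only [PiLp.inner_apply, RCLike.inner_apply, tp, Fintype.sum_prod_type, map_mul,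
    Finset.sum_mul_sum]
  exact Finset.sum_congr rfl fun i _ => Finset.sum_congr rfl fun j _ => by ring

theorem orthonormal_tp {ι κ : Type*} {a : ι → EuclideanSpace ℂ (Fin 2)}
    {c : κ → EuclideanSpace ℂ (Fin 2)} (ha : Orthonormal ℂ a) (hc : Orthonormal ℂ c) :
    Orthonormal ℂ fun p : ι × κ => tp (a p.1) (c p.2) := by
  classical
  rw [orthonormal_iff_ite] at ha hc ⊢
  intro p q
  rw [inner_tp, ha, hc]
  by_cases h₁ : p.1 = q.1 <;> by_cases h₂ : p.2 = q.2 <;> simp [h₁, h₂, Prod.ext_iff]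

def tpL : EuclideanSpace ℂ (Fin 2) →ₗ[ℂ] EuclideanSpace ℂ (Fin 2) →ₗ[ℂ]
    EuclideanSpace ℂ (Fin 2 × Fin 2) :=
  LinearMap.mk₂ ℂ tp
    (fun u u' v => by ext p; simp [tp]; ring)
    (fun c u v => by ext p; simp [tp]; ring)
    (fun u v v' => by ext p; simp [tp]; ring)
    (fun c u v => by ext p; simp [tp]; ring)

theorem apply_tp_eq_tp_map_of_basis {ι κ : Type*}
    (L : EuclideanSpace ℂ (Fin 2 × Fin 2) →ₗ[ℂ] EuclideanSpace ℂ (Fin 2 × Fin 2))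
    (W : EuclideanSpace ℂ (Fin 2) →ₗ[ℂ] EuclideanSpace ℂ (Fin 2))
    (a : Module.Basis ι ℂ (EuclideanSpace ℂ (Fin 2)))
    (b : Module.Basis κ ℂ (EuclideanSpace ℂ (Fin 2)))
    (h : ∀ i j, L (tp (a i) (b j)) = tp (a i) (W (b j))) (u v : EuclideanSpace ℂ (Fin 2)) :
    L (tp u v) = tp u (W v) :=
  LinearMap.congr_fun₂ (LinearMap.ext_basis a b (B := tpL.compr₂ L) (B' := tpL.compl₂ W) h) u v

/-- if the coincidence measurements `AB` (eigenbasis `ab_{ij} = V⁻¹(aᵢ⊗bⱼ)`)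
and `AB'` (eigenbasis `ab'_{ij} = V⁻¹(aᵢ⊗b'ⱼ)`) are both product measurements with respect
to the same isomorphism `V`, then the dynamical evolution `U` connecting them
(`U ab_{ij} = ab'_{ij}`) is unitary (it preserves inner products and is bijective) and is a
product evolution with respect to `V`: `V ∘ U ∘ V⁻¹ = 𝟙 ⊗ W` where `W bⱼ = b'ⱼ`, i.e.
`(V ∘ U ∘ V⁻¹)(u ⊗ v) = u ⊗ (W v)` for all `u, v ∈ ℂ²`. -/
theorem product_measurements_implies_product_evolution
    (V : EuclideanSpace ℂ (Fin 2 × Fin 2) ≃ₗᵢ[ℂ] EuclideanSpace ℂ (Fin 2 × Fin 2))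
    (a b b' : Fin 2 → EuclideanSpace ℂ (Fin 2))
    (ha : Orthonormal ℂ a) (hb : Orthonormal ℂ b) (hb' : Orthonormal ℂ b')
    (U : EuclideanSpace ℂ (Fin 2 × Fin 2) →ₗ[ℂ] EuclideanSpace ℂ (Fin 2 × Fin 2))
    (hU : ∀ i j : Fin 2, U (V.symm (tp (a i) (b j))) = V.symm (tp (a i) (b' j)))
    (W : EuclideanSpace ℂ (Fin 2) →ₗ[ℂ] EuclideanSpace ℂ (Fin 2))
    (hW : ∀ j : Fin 2, W (b j) = b' j) :
    (∀ x y : EuclideanSpace ℂ (Fin 2 × Fin 2), ⟪U x, U y⟫_ℂ = ⟪x, y⟫_ℂ) ∧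
    Function.Bijective U ∧
    (∀ u v : EuclideanSpace ℂ (Fin 2), V (U (V.symm (tp u v))) = tp u (W v)) := by
  have hab := (orthonormal_tp ha hb).comp_linearIsometryEquiv V.symm
  have hab' := (orthonormal_tp ha hb').comp_linearIsometryEquiv V.symm
  let AB := basisOfOrthonormalOfCardEqFinrank hab (by simp)
  have hAB : ⇑AB = _ := coe_basisOfOrthonormalOfCardEqFinrank hab _
  have hU_AB : ⇑U ∘ ⇑AB = ⇑V.symm ∘ fun p : Fin 2 × Fin 2 => tp (a p.1) (b' p.2) :=
    funext fun p => by simp [hAB, hU]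
  obtain ⟨hU_inner, hU_bij⟩ :=
    U.inner_map_map_and_bijective_of_orthonormal_basis (v := AB) (hAB ▸ hab) (hU_AB ▸ hab')
  refine ⟨hU_inner, hU_bij, ?_⟩
  let A := basisOfOrthonormalOfCardEqFinrank ha (by simp)
  let B := basisOfOrthonormalOfCardEqFinrank hb (by simp)
  refine apply_tp_eq_tp_map_of_basis (V.toLinearMap ∘ₗ U ∘ₗ V.symm.toLinearMap) W A B ?_
  intro i j
  simp [A, B, coe_basisOfOrthonormalOfCardEqFinrank, hU, hW]

end
end

section
/- Let V be a unitary operator on ℂ⁴, let {a₁, a₂}, {b₁, b₂}, {b'₁, b'₂} be orthonormal bases of ℂ², and let p ∈ ℂ⁴. Then for each i ∈ {1,2}, |⟨V⁻¹(aᵢ ⊗ b₁), p⟩|² + |⟨V⁻¹(aᵢ ⊗ b₂), p⟩|² = |⟨V⁻¹(aᵢ ⊗ b'₁), p⟩|² + |⟨V⁻¹(aᵢ ⊗ b'₂), p⟩|². In other words, if two coincidence measurements AB and AB' are product measurements with respect to the same isomorphism, then the marginal law is satisfied for the probabilities connected to these measurements in any state p. -/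
/-!
Unitarity moves `V⁻¹` across the inner product, and contracting the first tensor factor gives
`⟨aᵢ ⊗ v, q⟩ = ⟨v, w⟩` with `w = partialInner aᵢ q ∈ ℂ²`. Hence each side of the marginal law is
the Parseval sum of the same vector `w` (for `q = V p`) in an orthonormal basis of ℂ², i.e. `‖w‖²`.
-/

open scoped InnerProductSpace

noncomputable section

theorem Orthonormal.sum_sq_norm_inner_right_of_card_eq_finrank {𝕜 E ι : Type*} [RCLike 𝕜]
    [NormedAddCommGroup E] [InnerProductSpace 𝕜 E] [Fintype ι] [Nonempty ι] {v : ι → E}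
    (hv : Orthonormal 𝕜 v) (hcard : Fintype.card ι = Module.finrank 𝕜 E) (x : E) :
    ∑ i, ‖⟪v i, x⟫_𝕜‖ ^ 2 = ‖x‖ ^ 2 := by
  have hspan := (hv.linearIndependent.span_eq_top_of_card_eq_finrank hcard).ge
  simpa using (OrthonormalBasis.mk hv hspan).sum_sq_norm_inner_right x

def partialInner {𝕜 ι κ : Type*} [RCLike 𝕜] [Fintype ι] (u : EuclideanSpace 𝕜 ι)
    (q : EuclideanSpace 𝕜 (ι × κ)) : EuclideanSpace 𝕜 κ :=
  WithLp.toLp 2 fun k => ∑ l, starRingEnd 𝕜 (u l) * q (l, k)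

theorem inner_tp_left (u v : EuclideanSpace ℂ (Fin 2)) (q : EuclideanSpace ℂ (Fin 2 × Fin 2)) :
    ⟪tp u v, q⟫_ℂ = ⟪v, partialInner u q⟫_ℂ := by
  simp only [PiLp.inner_apply, RCLike.inner_apply, tp, partialInner, Fintype.sum_prod_type,
    Finset.sum_mul, map_mul]
  rw [Finset.sum_comm]
  exact Finset.sum_congr rfl fun k _ => Finset.sum_congr rfl fun l _ => by ring

theorem product_measurements_satisfy_marginal_law_general
    (V : EuclideanSpace ℂ (Fin 2 × Fin 2) ≃ₗᵢ[ℂ] EuclideanSpace ℂ (Fin 2 × Fin 2))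
    (a b b' : Fin 2 → EuclideanSpace ℂ (Fin 2))
    (hb : Orthonormal ℂ b) (hb' : Orthonormal ℂ b')
    (p : EuclideanSpace ℂ (Fin 2 × Fin 2)) :
    ∀ i : Fin 2,
      ‖⟪V.symm (tp (a i) (b 0)), p⟫_ℂ‖ ^ 2 + ‖⟪V.symm (tp (a i) (b 1)), p⟫_ℂ‖ ^ 2 =
        ‖⟪V.symm (tp (a i) (b' 0)), p⟫_ℂ‖ ^ 2 + ‖⟪V.symm (tp (a i) (b' 1)), p⟫_ℂ‖ ^ 2 := by
  intro i
  have marginal : ∀ c : Fin 2 → EuclideanSpace ℂ (Fin 2), Orthonormal ℂ c →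
      ‖⟪V.symm (tp (a i) (c 0)), p⟫_ℂ‖ ^ 2 + ‖⟪V.symm (tp (a i) (c 1)), p⟫_ℂ‖ ^ 2 =
        ‖partialInner (a i) (V p)‖ ^ 2 := by
    intro c hc
    simp only [V.symm.inner_map_eq_flip, LinearIsometryEquiv.symm_symm, inner_tp_left]
    rw [← hc.sum_sq_norm_inner_right_of_card_eq_finrank (by simp), Fin.sum_univ_two]
  rw [marginal b hb, marginal b' hb']

/-- if the coincidence measurements `AB` (eigenbasis `V⁻¹(aᵢ⊗bⱼ)`) and `AB'`
(eigenbasis `V⁻¹(aᵢ⊗b'ⱼ)`) are product measurements with respect to the same isomorphism `V`,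
then the marginal law holds in any state `p`:
`|⟨V⁻¹(aᵢ⊗b₁), p⟩|² + |⟨V⁻¹(aᵢ⊗b₂), p⟩|² = |⟨V⁻¹(aᵢ⊗b'₁), p⟩|² + |⟨V⁻¹(aᵢ⊗b'₂), p⟩|²`. -/
theorem product_measurements_satisfy_marginal_law
    (V : EuclideanSpace ℂ (Fin 2 × Fin 2) ≃ₗᵢ[ℂ] EuclideanSpace ℂ (Fin 2 × Fin 2))
    (a b b' : Fin 2 → EuclideanSpace ℂ (Fin 2))
    (ha : Orthonormal ℂ a) (hb : Orthonormal ℂ b) (hb' : Orthonormal ℂ b')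
    (p : EuclideanSpace ℂ (Fin 2 × Fin 2)) :
    ∀ i : Fin 2,
      ‖⟪V.symm (tp (a i) (b 0)), p⟫_ℂ‖ ^ 2 + ‖⟪V.symm (tp (a i) (b 1)), p⟫_ℂ‖ ^ 2 =
        ‖⟪V.symm (tp (a i) (b' 0)), p⟫_ℂ‖ ^ 2 + ‖⟪V.symm (tp (a i) (b' 1)), p⟫_ℂ‖ ^ 2 :=
  product_measurements_satisfy_marginal_law_general V a b b' hb hb' p

end
end

section
/- There do not exist a unitary operator V on ℂ⁴, orthonormal bases {a₁, a₂}, {b₁, b₂} of ℂ², unit vectors p_a, p_b ∈ ℂ², an orthonormal basis {y_{ij}}_{i,j ∈ {1,2}} of ℂ⁴ and a unit vector p ∈ ℂ⁴ satisfying V y_{ij} = aᵢ ⊗ bⱼ for all i, j, V p = p_a ⊗ p_b, and the experimentally measured coincidence probabilities of the measurement AB on 'The Animal Acts', namely |⟨y_{11}, p⟩|² = 4/81, |⟨y_{12}, p⟩|² = 51/81, |⟨y_{21}, p⟩|² = 21/81 and |⟨y_{22}, p⟩|² = 5/81. In other words, since these probabilities do not factorize through their marginals (4/81 ≠ (55/81)·(25/81)),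 there is no isomorphism of ℂ⁴ with ℂ²⊗ℂ² with respect to which both the state and the measurement AB are products; genuine entanglement is present. -/
/-! A unitary carrying both the measurement basis and the state to product vectors preserves inner
products, so every coincidence probability `|⟨y_{ij}, p⟩|²` splits as `|⟨aᵢ, p_a⟩|² |⟨bⱼ, p_b⟩|²`.
A table of the form `rᵢ sⱼ` has `q₁₁ q₂₂ = q₁₂ q₂₁`, whereas the data give `4 · 5 ≠ 51 · 21`. -/

open scoped InnerProductSpace

noncomputable section

theorem mul_mul_eq_mul_mul_of_forall_eq_mul {M ι κ : Type*} [CommSemigroup M]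
    {q : ι → κ → M} {r : ι → M} {s : κ → M} (h : ∀ i j, q i j = r i * s j) (i i' : ι) (j j' : κ) :
    q i j * q i' j' = q i j' * q i' j := by
  simp only [h]
  ac_rfl

theorem inner_tp_tp (u v w z : EuclideanSpace ℂ (Fin 2)) :
    ⟪tp u w, tp v z⟫_ℂ = ⟪u, v⟫_ℂ * ⟪w, z⟫_ℂ := by
  simp only [tp, PiLp.inner_apply, Fintype.sum_prod_type, Fin.sum_univ_two, RCLike.inner_apply,
    map_mul]
  ring

theorem inner_eq_mul_of_map_eq_tp {E : Type*} [NormedAddCommGroup E] [InnerProductSpace ℂ E]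
    (V : E →ₗᵢ[ℂ] EuclideanSpace ℂ (Fin 2 × Fin 2)) {x x' : E}
    {u u' v v' : EuclideanSpace ℂ (Fin 2)} (hx : V x = tp u v) (hx' : V x' = tp u' v') :
    ⟪x, x'⟫_ℂ = ⟪u, u'⟫_ℂ * ⟪v, v'⟫_ℂ := by
  rw [← V.inner_map_map, hx, hx', inner_tp_tp]

/-- there is no isomorphism `V` of ℂ⁴ with ℂ²⊗ℂ² with respect to which both the
state `p` and the measurement `AB` (with orthonormal eigenbasis `{y_{ij}}`) are products and
which reproduces the experimentally measured coincidence probabilities of `AB` on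
'The Animal Acts': `4/81, 51/81, 21/81, 5/81`. The probabilities do not factorize through
their marginals, so genuine entanglement is present. -/
theorem no_product_representation_of_AB_data :
    ¬ ∃ (V : EuclideanSpace ℂ (Fin 2 × Fin 2) ≃ₗᵢ[ℂ] EuclideanSpace ℂ (Fin 2 × Fin 2))
        (a b : Fin 2 → EuclideanSpace ℂ (Fin 2))
        (pa pb : EuclideanSpace ℂ (Fin 2))
        (y : Fin 2 → Fin 2 → EuclideanSpace ℂ (Fin 2 × Fin 2))
        (p : EuclideanSpace ℂ (Fin 2 × Fin 2)),
      Orthonormal ℂ a ∧ Orthonormal ℂ b ∧ ‖pa‖ = 1 ∧ ‖pb‖ = 1 ∧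
      Orthonormal ℂ (fun q : Fin 2 × Fin 2 => y q.1 q.2) ∧ ‖p‖ = 1 ∧
      (∀ i j : Fin 2, V (y i j) = tp (a i) (b j)) ∧
      V p = tp pa pb ∧
      ‖⟪y 0 0, p⟫_ℂ‖ ^ 2 = 4 / 81 ∧
      ‖⟪y 0 1, p⟫_ℂ‖ ^ 2 = 51 / 81 ∧
      ‖⟪y 1 0, p⟫_ℂ‖ ^ 2 = 21 / 81 ∧
      ‖⟪y 1 1, p⟫_ℂ‖ ^ 2 = 5 / 81 := by
  rintro ⟨V, a, b, pa, pb, y, p, -, -, -, -, -, -, hV, hp, h00, h01, h10, h11⟩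
  have hsplit : ∀ i j : Fin 2,
      ‖⟪y i j, p⟫_ℂ‖ ^ 2 = ‖⟪a i, pa⟫_ℂ‖ ^ 2 * ‖⟪b j, pb⟫_ℂ‖ ^ 2 := fun i j => by
    rw [inner_eq_mul_of_map_eq_tp V.toLinearIsometry (hV i j) hp, norm_mul, mul_pow]
  have hcross := mul_mul_eq_mul_mul_of_forall_eq_mul hsplit 0 1 0 1
  rw [h00, h11, h01, h10] at hcross
  norm_num at hcross

end
end
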